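/- Let X be a complex Hilbert space and (Xₙ) an increasing family of closed subspaces with ⋃ₙ Xₙ dense in X; let Pₙ ∈ L(X) be the orthogonal projection onto Xₙ. Let H : D(H) ⊆ X → X be densely defined and linear with H(D(H) ∩ Xₙ) ⊆ Xₙ and PₙH ⊆ HPₙ (i.e., for every x ∈ D(H): Pₙx ∈ D(H) and PₙHx = HPₙx) for all n. For each n let Hₙ : D(H) ∩ Xₙ ⊆ Xₙ → Xₙ, Hₙx = Hx. Then the following are equivalent: (i) H is closable and its closure H̄ is maximal dissipative in X; (ii) for every n, Hₙ is dissipative and the range of 1 − Hₙ is dense in Xₙ. -/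

import Mathlib

open scoped InnerProductSpace

variable {X : Type*} [NormedAddCommGroup X] [InnerProductSpace ℂ X] [CompleteSpace X]

/-- A (partially defined) linear operator `H` in a complex Hilbert space is *dissipative*
if `Re ⟪H x, x⟫ ≤ 0` for all `x` in its domain. -/
def IsDissipative (H : X →ₗ.[ℂ] X) : Prop :=
  ∀ x : H.domain, (⟪H x, (x : X)⟫_ℂ).re ≤ 0

/-- A dissipative operator is *maximal dissipative* if every dissipative extension of it
coincides with it. -/
def IsMaximalDissipative (H : X →ₗ.[ℂ] X) : Prop :=
  IsDissipative H ∧ ∀ K : X →ₗ.[ℂ] X, IsDissipative K → H ≤ K → K = H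

/-! A dissipative operator satisfies `‖x‖ ≤ ‖x - H x‖`, so `1 - H` is bounded below on its graph:
for a closed dissipative `H` the range of `1 - H` is closed, and if that range is all of `X` then
`H` has no proper dissipative extension. Conversely, a vector orthogonal to the range of `1 - H`
would yield a dissipative one-dimensional extension, so maximal dissipative operators have
`1 - H` with dense range. A densely defined dissipative operator is closable, because the closed
condition `Re ⟪y, x⟫ ≤ 0` passes to the closure of the graph, which is a subspace.

(i) ⇒ (ii): `Range (1 - H)` is dense since `Range (1 - H̄)` is, and `Pₙ`, which commutes with `H`
and fixes `Xₙ`, maps it into `Range (1 - Hₙ)`. (ii) ⇒ (i): `Pₙ x → x` makes `H` dissipative, hence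
closable with dissipative closure; `Range (1 - H̄)` is closed and contains every `Range (1 - Hₙ)`,
hence every `Xₙ`, hence their dense union. -/

open Filter Topology
open scoped ComplexConjugate

section InnerProductSpace

variable {𝕜 E : Type*} [RCLike 𝕜] [NormedAddCommGroup E] [InnerProductSpace 𝕜 E]

theorem norm_le_norm_sub_of_re_inner_nonpos {v w : E} (h : RCLike.re ⟪w, v⟫_𝕜 ≤ 0) :
    ‖v‖ ≤ ‖v - w‖ := by
  have hsq : ‖v‖ ^ 2 ≤ ‖v - w‖ * ‖v‖ :=
    calc ‖v‖ ^ 2 = RCLike.re ⟪v, v⟫_𝕜 := (inner_self_eq_norm_sq v).symm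
      _ ≤ RCLike.re ⟪v, v⟫_𝕜 - RCLike.re ⟪w, v⟫_𝕜 := by linarith
      _ = RCLike.re ⟪v - w, v⟫_𝕜 := by rw [inner_sub_left, map_sub]
      _ ≤ ‖v - w‖ * ‖v‖ := re_inner_le_norm _ _
  nlinarith [norm_nonneg v, norm_nonneg (v - w)]

theorem norm_le_two_mul_norm_sub_of_re_inner_nonpos {p : E × E} (h : RCLike.re ⟪p.2, p.1⟫_𝕜 ≤ 0) :
    ‖p‖ ≤ 2 * ‖p.1 - p.2‖ := by
  have h1 : ‖p.1‖ ≤ ‖p.1 - p.2‖ := norm_le_norm_sub_of_re_inner_nonpos h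
  have h2 : ‖p.2‖ ≤ ‖p.1‖ + ‖p.1 - p.2‖ := by
    simpa only [sub_sub_cancel] using norm_sub_le p.1 (p.1 - p.2)
  rw [Prod.norm_def, max_le_iff]
  constructor <;> linarith [norm_nonneg (p.1 - p.2)]

theorem isClosed_setOf_re_inner_nonpos : IsClosed {p : E × E | RCLike.re ⟪p.2, p.1⟫_𝕜 ≤ 0} :=
  isClosed_le (RCLike.continuous_re.comp (continuous_snd.inner continuous_fst)) continuous_const

theorem Submodule.eq_starProjection_of_mem_of_sub_mem_orthogonal {K : Submodule 𝕜 E}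
    [K.HasOrthogonalProjection] {P : E →L[𝕜] E} (hmem : ∀ x, P x ∈ K)
    (horth : ∀ x, x - P x ∈ Kᗮ) : P = K.starProjection :=
  ContinuousLinearMap.ext fun x =>
    (K.eq_starProjection_of_mem_of_inner_eq_zero (hmem x) ((K.mem_orthogonal' _).mp (horth x))).symm

theorem Submodule.starProjection_tendsto_self_of_dense_iUnion {U : ℕ → Submodule 𝕜 E}
    [∀ n, (U n).HasOrthogonalProjection] (hU : Monotone U) (hdense : Dense (⋃ n, (U n : Set E)))
    (x : E) : Tendsto (fun n => (U n).starProjection x) atTop (𝓝 x) := by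
  refine Submodule.starProjection_tendsto_self U hU x ?_
  rw [← Submodule.dense_iff_topologicalClosure_eq_top.mp
    (hdense.mono (Set.iUnion_subset fun n => SetLike.coe_subset_coe.mpr (le_iSup U n)))]

end InnerProductSpace

namespace LinearPMap

section Algebraic

variable {R E : Type*} [Ring R] [AddCommGroup E] [Module R E]

def rangeOneSub (f : E →ₗ.[R] E) : Submodule R E :=
  f.graph.map (LinearMap.fst R E E - LinearMap.snd R E E)

theorem mem_rangeOneSub {f : E →ₗ.[R] E} {y : E} :
    y ∈ f.rangeOneSub ↔ ∃ x : f.domain, (x : E) - f x = y := by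
  simp only [rangeOneSub, Submodule.mem_map, mem_graph_iff, Prod.exists]
  constructor
  · rintro ⟨a, _, ⟨x, rfl, rfl⟩, rfl⟩
    exact ⟨x, rfl⟩
  · rintro ⟨x, rfl⟩
    exact ⟨_, _, ⟨x, rfl, rfl⟩, rfl⟩

theorem rangeOneSub_mono {f g : E →ₗ.[R] E} (h : f ≤ g) : f.rangeOneSub ≤ g.rangeOneSub :=
  Submodule.map_mono (le_graph_of_le h)

theorem image_rangeOneSub_subset {f : E →ₗ.[R] E} {P : E →ₗ[R] E} {V : Submodule R E}
    (hPV : ∀ x, P x ∈ V)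
    (hcomm : ∀ x : f.domain, ∃ h : P (x : E) ∈ f.domain, f ⟨P (x : E), h⟩ = P (f x)) :
    P '' f.rangeOneSub ⊆ {y | ∃ x : f.domain, (x : E) ∈ V ∧ (x : E) - f x = y} := by
  rintro _ ⟨_, hy, rfl⟩
  obtain ⟨x, rfl⟩ := mem_rangeOneSub.mp hy
  obtain ⟨hx, hfx⟩ := hcomm x
  exact ⟨⟨P x, hx⟩, hPV x, by rw [hfx]; exact (P.map_sub _ _).symm⟩

end Algebraic

theorem IsClosable.rangeOneSub_closure_le {R E : Type*} [CommRing R] [AddCommGroup E]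
    [Module R E] [TopologicalSpace R] [TopologicalSpace E] [IsTopologicalAddGroup E]
    [ContinuousSMul R E] {f : E →ₗ.[R] E} (hf : f.IsClosable) :
    f.closure.rangeOneSub ≤ f.rangeOneSub.topologicalClosure := by
  rw [rangeOneSub, ← hf.graph_closure_eq_closure_graph]
  exact f.graph.topologicalClosure_map
    (ContinuousLinearMap.fst R E E - ContinuousLinearMap.snd R E E)

end LinearPMap

section Dissipative

variable {E : Type*} [NormedAddCommGroup E] [InnerProductSpace ℂ E] {H : E →ₗ.[ℂ] E}

theorem re_inner_add_smul_neg_add_smul {a b z : E} (c : ℂ) (h : ⟪b, z⟫_ℂ = ⟪a, z⟫_ℂ) :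
    (⟪b + c • -z, a + c • z⟫_ℂ).re = (⟪b, a⟫_ℂ).re - ‖c‖ ^ 2 * ‖z‖ ^ 2 := by
  have hexp : ⟪b + c • -z, a + c • z⟫_ℂ =
      ⟪b, a⟫_ℂ + (c * ⟪a, z⟫_ℂ - conj (c * ⟪a, z⟫_ℂ)) - ((‖c‖ ^ 2 * ‖z‖ ^ 2 : ℝ) : ℂ) := by
    simp only [inner_add_left, inner_add_right, inner_smul_left, inner_smul_right, inner_neg_left,
      h, map_mul, inner_conj_symm, inner_self_eq_norm_sq_to_K, RCLike.ofReal_eq_complex_ofReal,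
      Complex.ofReal_mul, Complex.ofReal_pow, ← Complex.conj_mul']
    ring
  rw [hexp, Complex.sub_re, Complex.add_re, Complex.sub_re, Complex.conj_re, sub_self, add_zero,
    Complex.ofReal_re]

theorem isDissipative_iff_graph_subset :
    IsDissipative H ↔ (H.graph : Set (E × E)) ⊆ {p | (⟪p.2, p.1⟫_ℂ).re ≤ 0} := by
  refine ⟨fun hH p hp => ?_, fun hH x => hH (H.mem_graph x)⟩
  obtain ⟨x, hx1, hx2⟩ := H.mem_graph_iff.mp hp
  simpa [← hx1, ← hx2] using hH x

namespace IsDissipative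

theorem mono {K : E →ₗ.[ℂ] E} (hK : IsDissipative K) (hHK : H ≤ K) : IsDissipative H :=
  isDissipative_iff_graph_subset.mpr
    ((SetLike.coe_subset_coe.mpr (LinearPMap.le_graph_of_le hHK)).trans
      (isDissipative_iff_graph_subset.mp hK))

theorem of_tendsto {ι : Type*} {l : Filter ι} [l.NeBot] {P : ι → E →L[ℂ] E}
    {V : ι → Submodule ℂ E} (hP : ∀ x, Tendsto (fun i => P i x) l (𝓝 x)) (hPV : ∀ i x, P i x ∈ V i)
    (hcomm : ∀ i (x : H.domain), ∃ h : P i (x : E) ∈ H.domain, H ⟨P i (x : E), h⟩ = P i (H x))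
    (hV : ∀ i (x : H.domain), (x : E) ∈ V i → (⟪H x, (x : E)⟫_ℂ).re ≤ 0) : IsDissipative H := by
  intro x
  choose hx hHx using fun i => hcomm i x
  refine le_of_tendsto' ((Complex.continuous_re.tendsto _).comp ((hP (H x)).inner (hP x)))
    fun i => ?_
  simpa only [Function.comp_apply, hHx] using hV i ⟨P i x, hx i⟩ (hPV i x)

theorem topologicalClosure_graph_subset (hH : IsDissipative H) :
    (H.graph.topologicalClosure : Set (E × E)) ⊆ {p | (⟪p.2, p.1⟫_ℂ).re ≤ 0} := by
  rw [Submodule.topologicalClosure_coe]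
  exact closure_minimal (isDissipative_iff_graph_subset.mp hH)
    (isClosed_setOf_re_inner_nonpos (𝕜 := ℂ))

theorem closure (hH : IsDissipative H) (hcl : H.IsClosable) : IsDissipative H.closure := by
  rw [isDissipative_iff_graph_subset, ← hcl.graph_closure_eq_closure_graph]
  exact hH.topologicalClosure_graph_subset

theorem mem_orthogonal_domain_of_mem_topologicalClosure_graph (hH : IsDissipative H) {y : E}
    (hy : (0, y) ∈ H.graph.topologicalClosure) : y ∈ H.domainᗮ := by
  set G := H.graph.topologicalClosure
  have hre (u : H.domain) : (⟪y, (u : E)⟫_ℂ).re ≤ 0 := by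
    have hpos (t : ℝ) (_ : 0 < t) : (⟪H u, (u : E)⟫_ℂ).re + t * (⟪y, (u : E)⟫_ℂ).re ≤ 0 := by
      have := hH.topologicalClosure_graph_subset
        (G.add_mem (H.graph.le_topologicalClosure (H.mem_graph u)) (G.smul_mem (t : ℂ) hy))
      simpa [inner_add_left, inner_smul_left] using this
    by_contra! hy'
    have := hpos ((|(⟪H u, (u : E)⟫_ℂ).re| + 1) / (⟪y, (u : E)⟫_ℂ).re) (by positivity)
    rw [div_mul_cancel₀ _ hy'.ne'] at this
    linarith [neg_abs_le (⟪H u, (u : E)⟫_ℂ).re]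
  refine (Submodule.mem_orthogonal' _ _).mpr fun u hu => ?_
  have := hre (⟪u, y⟫_ℂ • ⟨u, hu⟩)
  rw [Submodule.coe_smul, inner_smul_right, ← inner_conj_symm, Complex.conj_mul'] at this
  have hsq : ‖⟪y, u⟫_ℂ‖ ^ 2 ≤ 0 := by exact_mod_cast this
  simpa using hsq

theorem isClosable [CompleteSpace E] (hH : IsDissipative H) (hdense : Dense (H.domain : Set E)) :
    H.IsClosable := by
  have hdom : H.domainᗮ = ⊥ := Submodule.topologicalClosure_eq_top_iff.mp
    (Submodule.dense_iff_topologicalClosure_eq_top.mp hdense)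
  refine ⟨_, (Submodule.toLinearPMap_graph_eq _ fun p hp hp1 => ?_).symm⟩
  obtain ⟨_, y⟩ := p
  simp only at hp1 ⊢
  subst hp1
  simpa [hdom] using hH.mem_orthogonal_domain_of_mem_topologicalClosure_graph hp

theorem isClosed_rangeOneSub [CompleteSpace E] (hH : IsDissipative H) (hc : H.IsClosed) :
    IsClosed (H.rangeOneSub : Set E) := by
  have : CompleteSpace H.graph := hc.completeSpace_coe
  let T : H.graph →L[ℂ] E :=
    (ContinuousLinearMap.fst ℂ E E - ContinuousLinearMap.snd ℂ E E).comp H.graph.subtypeL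
  have hT (p : H.graph) : ‖p‖ ≤ (2 : NNReal) * ‖T p‖ :=
    norm_le_two_mul_norm_sub_of_re_inner_nonpos (𝕜 := ℂ) (isDissipative_iff_graph_subset.mp hH p.2)
  have hrange : Set.range T = H.rangeOneSub := by
    ext y
    simp [T, LinearPMap.rangeOneSub]
  rw [← hrange]
  exact (T.antilipschitz_of_bound hT).isClosed_range T.uniformContinuous

theorem isMaximalDissipative (hH : IsDissipative H) (hR : H.rangeOneSub = ⊤) :
    IsMaximalDissipative H := by
  refine ⟨hH, fun K hK hHK => (LinearPMap.eq_of_le_of_domain_eq hHK ?_).symm⟩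
  refine le_antisymm hHK.1 fun u hu => ?_
  -- `(1 - K) (u - v) = 0` for `v ∈ D(H)` with `(1 - H) v = (1 - K) u`, so `u = v`.
  obtain ⟨v, hv⟩ := LinearPMap.mem_rangeOneSub.mp (hR ▸ Submodule.mem_top : u - K ⟨u, hu⟩ ∈ _)
  set w : K.domain := ⟨u, hu⟩ - ⟨v, hHK.1 v.2⟩
  have hKv : K ⟨v, hHK.1 v.2⟩ = H v := (hHK.2 rfl).symm
  have hw : (w : E) - K w = 0 := by
    rw [K.map_sub, hKv]
    simp only [w, Submodule.coe_sub]
    rw [sub_sub_sub_comm, hv, sub_self]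
  have := norm_le_norm_sub_of_re_inner_nonpos (𝕜 := ℂ) (hK w)
  rw [hw, norm_zero, norm_le_zero_iff, Submodule.coe_sub, sub_eq_zero] at this
  have huv : u = v := this
  exact huv ▸ v.2

theorem supSpanSingleton_neg {z : E} (hH : IsDissipative H) (hz : z ∉ H.domain)
    (horth : ∀ u : H.domain, ⟪H u, z⟫_ℂ = ⟪(u : E), z⟫_ℂ) :
    IsDissipative (H.supSpanSingleton z (-z) hz) := by
  rintro ⟨w, hw⟩
  obtain ⟨u, hu, _, hc, rfl⟩ := Submodule.mem_sup.mp hw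
  obtain ⟨c, rfl⟩ := Submodule.mem_span_singleton.mp hc
  simp only [H.supSpanSingleton_apply_mk z (-z) hz u hu c, RingHom.id_apply,
    re_inner_add_smul_neg_add_smul c (horth ⟨u, hu⟩)]
  linarith [hH ⟨u, hu⟩, (by positivity : 0 ≤ ‖c‖ ^ 2 * ‖z‖ ^ 2)]

end IsDissipative

theorem IsMaximalDissipative.dense_rangeOneSub [CompleteSpace E] (hH : IsMaximalDissipative H) :
    Dense (H.rangeOneSub : Set E) := by
  rw [Submodule.dense_iff_topologicalClosure_eq_top, Submodule.topologicalClosure_eq_top_iff,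
    Submodule.eq_bot_iff]
  intro z hz
  have horth (u : H.domain) : ⟪H u, z⟫_ℂ = ⟪(u : E), z⟫_ℂ := by
    have := (Submodule.mem_orthogonal _ z).mp hz _ (LinearPMap.mem_rangeOneSub.mpr ⟨u, rfl⟩)
    rwa [inner_sub_left, sub_eq_zero, eq_comm] at this
  by_contra hz0
  have hzD : z ∉ H.domain := fun hzD =>
    hz0 (re_inner_self_nonpos (𝕜 := ℂ) |>.mp ((horth ⟨z, hzD⟩) ▸ hH.1 ⟨z, hzD⟩))
  have hext := hH.2 _ (hH.1.supSpanSingleton_neg hzD horth) (H.left_le_sup _ _)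
  have hzK : z ∈ (H.supSpanSingleton z (-z) hzD).domain :=
    Submodule.mem_sup_right (Submodule.mem_span_singleton_self z)
  exact hzD (hext ▸ hzK)

end Dissipative

theorem stmt_7_general (Xn : ℕ → Submodule ℂ X) (hmono : Monotone Xn)
    (hXnclosed : ∀ n, IsClosed ((Xn n : Submodule ℂ X) : Set X))
    (hUdense : Dense (⋃ n, ((Xn n : Submodule ℂ X) : Set X)))
    (P : ℕ → X →L[ℂ] X) (hPmem : ∀ n x, P n x ∈ Xn n)
    (hPortho : ∀ n x, x - P n x ∈ (Xn n)ᗮ)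
    (H : X →ₗ.[ℂ] X) (hdense : Dense (H.domain : Set X))
    (hcomm : ∀ (n : ℕ) (x : H.domain),
      ∃ h : P n (x : X) ∈ H.domain, H ⟨P n (x : X), h⟩ = P n (H x)) :
    (H.IsClosable ∧ IsMaximalDissipative H.closure) ↔
      ∀ n : ℕ,
        (∀ x : H.domain, (x : X) ∈ Xn n → (⟪H x, (x : X)⟫_ℂ).re ≤ 0) ∧
        ((Xn n : Set X) ⊆
          closure {y : X | ∃ x : H.domain, (x : X) ∈ Xn n ∧ (x : X) - H x = y}) := by
  have (n : ℕ) : (Xn n).HasOrthogonalProjection :=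
    have := (hXnclosed n).completeSpace_coe
    inferInstance
  have hP (n : ℕ) : P n = (Xn n).starProjection :=
    Submodule.eq_starProjection_of_mem_of_sub_mem_orthogonal (hPmem n) (hPortho n)
  constructor
  · rintro ⟨hcl, hmax⟩ n
    refine ⟨fun x _ => hmax.1.mono H.le_closure x, fun x hx => ?_⟩
    have hR : Dense (H.rangeOneSub : Set X) := by
      rw [← dense_closure, ← Submodule.topologicalClosure_coe]
      exact hmax.dense_rangeOneSub.mono hcl.rangeOneSub_closure_le
    have hPx : P n x = x := by rw [hP n, Submodule.starProjection_eq_self_iff.mpr hx]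
    exact closure_mono (LinearPMap.image_rangeOneSub_subset (P := P n) (hPmem n) (hcomm n))
      (image_closure_subset_closure_image (P n).continuous ⟨x, hR x, hPx⟩)
  · intro h
    have hlim (y : X) : Tendsto (fun n => P n y) atTop (𝓝 y) := by
      simpa only [hP] using Submodule.starProjection_tendsto_self_of_dense_iUnion hmono hUdense y
    have hdiss := IsDissipative.of_tendsto hlim hPmem hcomm fun n => (h n).1
    have hcl := hdiss.isClosable hdense
    have hclosed := (hdiss.closure hcl).isClosed_rangeOneSub hcl.closure_isClosed
    have hXn (n : ℕ) : (Xn n : Set X) ⊆ H.closure.rangeOneSub := by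
      refine (h n).2.trans (closure_minimal ?_ hclosed)
      rintro _ ⟨x, -, rfl⟩
      exact LinearPMap.rangeOneSub_mono H.le_closure (LinearPMap.mem_rangeOneSub.mpr ⟨x, rfl⟩)
    refine ⟨hcl, (hdiss.closure hcl).isMaximalDissipative (Submodule.eq_top_iff'.mpr fun y => ?_)⟩
    exact hclosed.closure_subset_iff.mpr (Set.iUnion_subset hXn) (hUdense y)

/-- Let `(Xₙ)` be an increasing family of closed subspaces of a complex
Hilbert space `X` with dense union, `Pₙ` the orthogonal projection onto `Xₙ` (characterized
by `Pₙ x ∈ Xₙ` and `x − Pₙ x ⟂ Xₙ`), and `H` a densely defined linear operator which leaves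
each `Xₙ` invariant and satisfies `Pₙ H ⊆ H Pₙ`.  Let `Hₙ : D(H) ∩ Xₙ ⊆ Xₙ → Xₙ` be the
restriction of `H`.  Then `H` is closable with maximal dissipative closure if and only if,
for every `n`, `Hₙ` is dissipative and `Range(1 − Hₙ)` is dense in `Xₙ`. -/
theorem stmt_7 (Xn : ℕ → Submodule ℂ X) (hmono : Monotone Xn)
    (hXnclosed : ∀ n, IsClosed ((Xn n : Submodule ℂ X) : Set X))
    (hUdense : Dense (⋃ n, ((Xn n : Submodule ℂ X) : Set X)))
    (P : ℕ → X →L[ℂ] X) (hPmem : ∀ n x, P n x ∈ Xn n)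
    (hPortho : ∀ n x, x - P n x ∈ (Xn n)ᗮ)
    (H : X →ₗ.[ℂ] X) (hdense : Dense (H.domain : Set X))
    (hinv : ∀ (n : ℕ) (x : H.domain), (x : X) ∈ Xn n → H x ∈ Xn n)
    (hcomm : ∀ (n : ℕ) (x : H.domain),
      ∃ h : P n (x : X) ∈ H.domain, H ⟨P n (x : X), h⟩ = P n (H x)) :
    (H.IsClosable ∧ IsMaximalDissipative H.closure) ↔
      ∀ n : ℕ,
        (∀ x : H.domain, (x : X) ∈ Xn n → (⟪H x, (x : X)⟫_ℂ).re ≤ 0) ∧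
        ((Xn n : Set X) ⊆
          closure {y : X | ∃ x : H.domain, (x : X) ∈ Xn n ∧ (x : X) - H x = y}) :=
  stmt_7_general Xn hmono hXnclosed hUdense P hPmem hPortho H hdense hcomm
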